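/- arXiv:0912.1223 — 4 statements merged into one kernel-verified Lean document; each statement's English description precedes it below -/
import Mathlib

section
/- Let u be a harmonic function on a domain in ℂ, let u* be a harmonic conjugate of u, and let φ > 0 be any smooth function of one real variable. Then, away from the critical points of u, the level lines of u are geodesics (length-minimizing curves) for the conformal metric dσ = φ(u*)|∇u||dz|. -/
open Complex Filter Set MeasureTheory

noncomputable section

/-- The Laplacian of a real-valued function on `ℂ` (viewed as `ℝ²`). -/
def lap2 (f : ℂ → ℝ) (z : ℂ) : ℝ :=
  fderiv ℝ (fun w => fderiv ℝ f w 1) z 1 +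
    fderiv ℝ (fun w => fderiv ℝ f w Complex.I) z Complex.I

/-- `f` is harmonic on the set `s`. -/
def HarmOn (f : ℂ → ℝ) (s : Set ℂ) : Prop :=
  ContDiffOn ℝ 2 f s ∧ ∀ z ∈ s, lap2 f z = 0

/-- Wirtinger derivative `∂f/∂z` of a real-valued function. -/
def wdz (f : ℂ → ℝ) (z : ℂ) : ℂ :=
  (((fderiv ℝ f z 1 : ℝ) : ℂ) - Complex.I * ((fderiv ℝ f z Complex.I : ℝ) : ℂ)) / 2

/-- Wirtinger derivative `∂f/∂z̄` of a real-valued function. -/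
def wdzbar (f : ℂ → ℝ) (z : ℂ) : ℂ :=
  (((fderiv ℝ f z 1 : ℝ) : ℂ) + Complex.I * ((fderiv ℝ f z Complex.I : ℝ) : ℂ)) / 2

/-- Wirtinger derivative `∂f/∂z` of a complex-valued function. -/
def wdzC (f : ℂ → ℂ) (z : ℂ) : ℂ :=
  (fderiv ℝ f z 1 - Complex.I * fderiv ℝ f z Complex.I) / 2

/-- Wirtinger derivative `∂f/∂z̄` of a complex-valued function. -/
def wdzbarC (f : ℂ → ℂ) (z : ℂ) : ℂ :=
  (fderiv ℝ f z 1 + Complex.I * fderiv ℝ f z Complex.I) / 2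

/-- The mixed derivative `∂²G/∂z∂ζ` of a two-variable function `G`. -/
def d2G (G : ℂ → ℂ → ℝ) (z ζ : ℂ) : ℂ := wdzC (fun w => wdz (fun x => G x w) z) ζ

/-- The mixed derivative `∂²G/∂z∂ζ̄` of a two-variable function `G`. -/
def d2Gbar (G : ℂ → ℂ → ℝ) (z ζ : ℂ) : ℂ := wdzbarC (fun w => wdz (fun x => G x w) z) ζ

/-- The Bergman kernel `K(z,ζ) = -(2/π)·∂²G/∂z∂ζ̄` of the Green's function `G`. -/
def KB (G : ℂ → ℂ → ℝ) (z ζ : ℂ) : ℂ := -((2 / Real.pi : ℝ) : ℂ) * d2Gbar G z ζ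

/-- The Schiffer kernel `L(z,ζ) = -(2/π)·∂²G/∂z∂ζ` of the Green's function `G`. -/
def LB (G : ℂ → ℂ → ℝ) (z ζ : ℂ) : ℂ := -((2 / Real.pi : ℝ) : ℂ) * d2G G z ζ

/-- `G` is the (Dirichlet) Green's function of the domain `Ω`:
it is symmetric and positive, `G(·,ζ) = -log|z-ζ| + harmonic` in `Ω`,
and `G(·,ζ)` tends to `0` at every boundary point. -/
structure IsGreenFn (Ω : Set ℂ) (G : ℂ → ℂ → ℝ) : Prop where
  symm : ∀ z ∈ Ω, ∀ ζ ∈ Ω, G z ζ = G ζ z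
  pos : ∀ ζ ∈ Ω, ∀ z ∈ Ω, z ≠ ζ → 0 < G z ζ
  harm : ∀ ζ ∈ Ω, ∃ h : ℂ → ℝ, HarmOn h Ω ∧
    ∀ z ∈ Ω, z ≠ ζ → G z ζ = -Real.log ‖z - ζ‖ + h z
  bdry : ∀ ζ ∈ Ω, ∀ w ∈ frontier Ω, Filter.Tendsto (fun z => G z ζ) (nhdsWithin w Ω) (nhds 0)

/-- The euclidean norm of the gradient of a real-valued function on `ℂ`. -/
def nGrad (f : ℂ → ℝ) (z : ℂ) : ℝ :=
  Real.sqrt ((fderiv ℝ f z 1) ^ 2 + (fderiv ℝ f z Complex.I) ^ 2)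

/-- The gradient of a real-valued function on `ℂ`, as a complex number. -/
def gradC (f : ℂ → ℝ) (z : ℂ) : ℂ :=
  ((fderiv ℝ f z 1 : ℝ) : ℂ) + Complex.I * ((fderiv ℝ f z Complex.I : ℝ) : ℂ)

/-- The signed euclidean curvature of a parametrized plane curve. -/
def curvK (γ : ℝ → ℂ) (t : ℝ) : ℝ :=
  ((starRingEnd ℂ) (deriv γ t) * deriv (deriv γ) t).im / ‖deriv γ t‖ ^ 3

/-- The potential energy `V = -(1/2)|∇u|²`. -/
def potV (u : ℂ → ℝ) (z : ℂ) : ℝ :=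
  -(1 / 2) * ((fderiv ℝ u z 1) ^ 2 + (fderiv ℝ u z Complex.I) ^ 2)

/-- The density of the Poincaré metric (of curvature `-4`) obtained by pulling back
`|dζ|/(1-|ζ|²)` under a conformal map `φ` onto the unit disk. -/
def poincareDen (φ : ℂ → ℂ) (z : ℂ) : ℝ := ‖deriv φ z‖ / (1 - ‖φ z‖ ^ 2)

/-- The period of the differential on the Schottky double represented by the pair
`(f₁, f₂)` along the closed cycle obtained from the path `γ` (run through `Ω`)
together with its mirror path on the back side of the double. -/
def pairPeriod (f₁ f₂ : ℂ → ℂ) (γ : ℝ → ℂ) : ℂ :=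
  (∫ t in (0:ℝ)..1, f₁ (γ t) * deriv γ t) -
    (starRingEnd ℂ) (∫ t in (0:ℝ)..1, f₂ (γ t) * deriv γ t)

/-- The annulus `A_{1,R} = {z : 1 < |z| < R}`. -/
def ann (R : ℝ) : Set ℂ := {z : ℂ | 1 < ‖z‖ ∧ ‖z‖ < R}

/-- The lattice point `2m₁ω₁ + 2m₂ω₂` for the half-periods `ω₁ = log R`, `ω₂ = iπ`. -/
def latC (R : ℝ) (p : ℤ × ℤ) : ℂ :=
  2 * (p.1 : ℂ) * ((Real.log R : ℝ) : ℂ) + 2 * (p.2 : ℂ) * (((Real.pi : ℝ) : ℂ) * Complex.I)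

/-- The Weierstrass `℘`-function for the lattice with half-periods `log R` and `iπ`. -/
def weierP (R : ℝ) (z : ℂ) : ℂ :=
  1 / z ^ 2 + ∑' p : {p : ℤ × ℤ // p ≠ 0}, (1 / (z - latC R p.val) ^ 2 - 1 / latC R p.val ^ 2)

/-- The Weierstrass `ζ`-function for the lattice with half-periods `log R` and `iπ`. -/
def weierZ (R : ℝ) (z : ℂ) : ℂ :=
  1 / z + ∑' p : {p : ℤ × ℤ // p ≠ 0},
    (1 / (z - latC R p.val) + 1 / latC R p.val + z / latC R p.val ^ 2)

/-- The constant `η₁ = ζ(ω₁)` for the half-period `ω₁ = log R`. -/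
def eta1 (R : ℝ) : ℂ := weierZ R ((Real.log R : ℝ) : ℂ)

/-- `H` is the analytic completion (in the first variable) of the regular part of the
Green's function `G` of `Ω`, normalized by `Im H(ζ,ζ) = 0`. -/
structure IsACompl (Ω : Set ℂ) (G : ℂ → ℂ → ℝ) (H : ℂ → ℂ → ℂ) : Prop where
  holo : ∀ ζ ∈ Ω, DifferentiableOn ℂ (fun z => H z ζ) Ω
  re : ∀ ζ ∈ Ω, ∀ z ∈ Ω, z ≠ ζ → (H z ζ).re = G z ζ + Real.log ‖z - ζ‖
  norm : ∀ ζ ∈ Ω, (H ζ ζ).im = 0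

end

section Aux

/-- Decomposition of a real-linear map on `ℂ` in the basis `1, I`. -/
lemma clm_decomp (L : ℂ →L[ℝ] ℝ) (w : ℂ) :
    L w = w.re * L 1 + w.im * L Complex.I := by
  have hw : L w = L (w.re • (1 : ℂ) + w.im • Complex.I) := by
    congr 1
    apply Complex.ext <;> simp
  rw [hw, map_add, _root_.map_smul, _root_.map_smul, smul_eq_mul, smul_eq_mul]

lemma norm_complex_eq (w : ℂ) : ‖w‖ = Real.sqrt (w.re ^ 2 + w.im ^ 2) := by
  rw [Complex.norm_def, Complex.normSq_apply]
  ring_nf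

/-- Cauchy–Schwarz in `ℝ²`. -/
lemma cs_ineq (a b : ℝ) (w : ℂ) :
    |w.re * a + w.im * b| ≤ Real.sqrt (a ^ 2 + b ^ 2) * ‖w‖ := by
  rw [norm_complex_eq, ← Real.sqrt_mul (by positivity)]
  apply Real.abs_le_sqrt
  nlinarith [sq_nonneg (w.re * b - w.im * a)]

lemma deriv_nonneg_of_monotoneOn {f : ℝ → ℝ} {A B t c : ℝ}
    (hf : MonotoneOn f (Set.Icc A B)) (ht : t ∈ Set.Ioo A B)
    (hd : HasDerivAt f c t) : 0 ≤ c := by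
  rw [hasDerivAt_iff_tendsto_slope] at hd
  refine ge_of_tendsto hd ?_
  have hmem : Set.Ioo A B ∈ nhdsWithin t {t}ᶜ :=
    mem_nhdsWithin_of_mem_nhds (Ioo_mem_nhds ht.1 ht.2)
  filter_upwards [hmem, self_mem_nhdsWithin] with s hs hst
  have hsI : s ∈ Set.Icc A B := Set.Ioo_subset_Icc_self hs
  have htI : t ∈ Set.Icc A B := Set.Ioo_subset_Icc_self ht
  rw [slope_def_field]
  rcases lt_or_gt_of_ne (by simpa using hst : s ≠ t) with h | h
  · have : f s ≤ f t := hf hsI htI h.le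
    rw [div_nonneg_iff]
    right
    constructor <;> linarith
  · have : f t ≤ f s := hf htI hsI h.le
    rw [div_nonneg_iff]
    left
    constructor <;> linarith

end Aux

/-- Let `u` be harmonic on a domain `Ω`, `v` a harmonic conjugate of `u`,
and `φ > 0` smooth. Away from the critical points of `u`, the level lines of `u` are
geodesics (length minimizers) for the metric `dσ = φ(u*)|∇u||dz|`: any injectively
traversed arc `γ` of a level line minimizes `∫ φ(v)|∇u||dz|` among all curves `δ` in `Ω`
with the same endpoints. -/
theorem level_lines_are_geodesics
    (Ω : Set ℂ) (u v : ℂ → ℝ) (φ : ℝ → ℝ)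
    (hopen : IsOpen Ω) (hu : HarmOn u Ω)
    (hv : ContDiffOn ℝ 1 v Ω)
    (hCR : ∀ z ∈ Ω, fderiv ℝ v z 1 = -(fderiv ℝ u z Complex.I) ∧
      fderiv ℝ v z Complex.I = fderiv ℝ u z 1)
    (hφ : ContDiff ℝ (⊤ : ℕ∞) φ) (hφpos : ∀ x : ℝ, 0 < φ x)
    (γ : ℝ → ℂ) (A B : ℝ) (hAB : A ≤ B) (hγ : ContDiff ℝ 1 γ)
    (hγΩ : ∀ t ∈ Set.Icc A B, γ t ∈ Ω)
    (hlevel : ∀ t ∈ Set.Icc A B, u (γ t) = u (γ A))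
    (hnoncrit : ∀ t ∈ Set.Icc A B, fderiv ℝ u (γ t) ≠ 0)
    (hmono : MonotoneOn (fun t => v (γ t)) (Set.Icc A B) ∨
      AntitoneOn (fun t => v (γ t)) (Set.Icc A B)) :
    ∀ δ : ℝ → ℂ, ContDiff ℝ 1 δ → (∀ t ∈ Set.Icc A B, δ t ∈ Ω) →
      δ A = γ A → δ B = γ B →
      (∫ t in A..B, φ (v (γ t)) * nGrad u (γ t) * ‖deriv γ t‖) ≤
        ∫ t in A..B, φ (v (δ t)) * nGrad u (δ t) * ‖deriv δ t‖ := by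
  intro δ hδ hδΩ hδA hδB
  set Φ : ℝ → ℝ := fun x => ∫ s in (0:ℝ)..x, φ s with hΦdef
  have hΦd : ∀ x : ℝ, HasDerivAt Φ (φ x) x := fun x =>
    (hφ.continuous.integral_hasStrictDerivAt 0 x).hasDerivAt
  have hIcc : Set.uIcc A B = Set.Icc A B := Set.uIcc_of_le hAB
  have hvC : ContinuousOn (fun z => fderiv ℝ v z) Ω :=
    hv.continuousOn_fderiv_of_isOpen hopen le_rfl
  have huC : ContinuousOn (fun z => fderiv ℝ u z) Ω :=
    hu.1.continuousOn_fderiv_of_isOpen hopen (by norm_num)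
  have hvD : ∀ z ∈ Ω, DifferentiableAt ℝ v z := fun z hz =>
    (hv.contDiffAt (hopen.mem_nhds hz)).differentiableAt one_ne_zero
  have huD : ∀ z ∈ Ω, DifferentiableAt ℝ u z := fun z hz =>
    (hu.1.contDiffAt (hopen.mem_nhds hz)).differentiableAt (by norm_num)
  have hnv : ∀ z ∈ Ω,
      Real.sqrt ((fderiv ℝ v z 1) ^ 2 + (fderiv ℝ v z Complex.I) ^ 2) = nGrad u z := by
    intro z hz
    obtain ⟨h1, h2⟩ := hCR z hz
    simp only [nGrad]
    rw [h1, h2, show (-(fderiv ℝ u z Complex.I)) ^ 2 + (fderiv ℝ u z 1) ^ 2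
      = (fderiv ℝ u z 1) ^ 2 + (fderiv ℝ u z Complex.I) ^ 2 by ring]
  -- key facts for a general C¹ path in Ω
  have key : ∀ ρ : ℝ → ℂ, ContDiff ℝ 1 ρ → (∀ t ∈ Set.Icc A B, ρ t ∈ Ω) →
      (∀ t ∈ Set.Icc A B,
        HasDerivAt (fun s => v (ρ s)) (fderiv ℝ v (ρ t) (deriv ρ t)) t) ∧
      IntervalIntegrable (fun t => φ (v (ρ t)) * fderiv ℝ v (ρ t) (deriv ρ t)) volume A B ∧
      IntervalIntegrable (fun t => φ (v (ρ t)) * nGrad u (ρ t) * ‖deriv ρ t‖) volume A B ∧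
      (∫ t in A..B, φ (v (ρ t)) * fderiv ℝ v (ρ t) (deriv ρ t)) = Φ (v (ρ B)) - Φ (v (ρ A)) ∧
      (∀ t ∈ Set.Icc A B, |φ (v (ρ t)) * fderiv ℝ v (ρ t) (deriv ρ t)| ≤
        φ (v (ρ t)) * nGrad u (ρ t) * ‖deriv ρ t‖) := by
    intro ρ hρ hρΩ
    have hρcont : ContinuousOn ρ (Set.Icc A B) := hρ.continuous.continuousOn
    have hρd : ∀ t, HasDerivAt ρ (deriv ρ t) t := fun t =>
      ((hρ.differentiable one_ne_zero) t).hasDerivAt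
    have hchain : ∀ t ∈ Set.Icc A B,
        HasDerivAt (fun s => v (ρ s)) (fderiv ℝ v (ρ t) (deriv ρ t)) t := fun t ht =>
      (hvD _ (hρΩ t ht)).hasFDerivAt.comp_hasDerivAt t (hρd t)
    have hΦchain : ∀ t ∈ Set.Icc A B,
        HasDerivAt (fun s => Φ (v (ρ s)))
          (φ (v (ρ t)) * fderiv ℝ v (ρ t) (deriv ρ t)) t := by
      intro t ht
      have := (hΦd (v (ρ t))).comp t (hchain t ht)
      exact this
    have hφvρ : ContinuousOn (fun t => φ (v (ρ t))) (Set.Icc A B) :=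
      hφ.continuous.comp_continuousOn (hv.continuousOn.comp hρcont (fun t ht => hρΩ t ht))
    have hderivρ : Continuous (deriv ρ) := hρ.continuous_deriv le_rfl
    have hfvρ : ContinuousOn (fun t => fderiv ℝ v (ρ t) (deriv ρ t)) (Set.Icc A B) :=
      (hvC.comp hρcont (fun t ht => hρΩ t ht)).clm_apply hderivρ.continuousOn
    have huCρ : ContinuousOn (fun t => fderiv ℝ u (ρ t)) (Set.Icc A B) :=
      huC.comp hρcont (fun t ht => hρΩ t ht)
    have hng : ContinuousOn (fun t => nGrad u (ρ t)) (Set.Icc A B) := by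
      simp only [nGrad]
      exact Real.continuous_sqrt.comp_continuousOn
        (((huCρ.clm_apply continuousOn_const).pow 2).add
          ((huCρ.clm_apply continuousOn_const).pow 2))
    have hint1 : IntervalIntegrable
        (fun t => φ (v (ρ t)) * fderiv ℝ v (ρ t) (deriv ρ t)) volume A B := by
      apply ContinuousOn.intervalIntegrable
      rw [hIcc]
      exact hφvρ.mul hfvρ
    have hint2 : IntervalIntegrable
        (fun t => φ (v (ρ t)) * nGrad u (ρ t) * ‖deriv ρ t‖) volume A B := by
      apply ContinuousOn.intervalIntegrable
      rw [hIcc]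
      exact (hφvρ.mul hng).mul hderivρ.norm.continuousOn
    refine ⟨hchain, hint1, hint2, ?_, ?_⟩
    · exact intervalIntegral.integral_eq_sub_of_hasDerivAt
        (fun t ht => hΦchain t (hIcc ▸ ht)) hint1
    · intro t ht
      have hz := hρΩ t ht
      rw [abs_mul, abs_of_pos (hφpos _), mul_assoc]
      refine mul_le_mul_of_nonneg_left ?_ (hφpos _).le
      calc |fderiv ℝ v (ρ t) (deriv ρ t)|
          = |(deriv ρ t).re * fderiv ℝ v (ρ t) 1 +
              (deriv ρ t).im * fderiv ℝ v (ρ t) Complex.I| := by rw [clm_decomp]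
        _ ≤ Real.sqrt ((fderiv ℝ v (ρ t) 1) ^ 2 + (fderiv ℝ v (ρ t) Complex.I) ^ 2) *
              ‖deriv ρ t‖ := cs_ineq _ _ _
        _ = nGrad u (ρ t) * ‖deriv ρ t‖ := by rw [hnv _ hz]
  obtain ⟨hchainδ, hintδ1, hintδ2, hFTCδ, hleδ⟩ := key δ hδ hδΩ
  obtain ⟨hchainγ, hintγ1, hintγ2, hFTCγ, hleγ⟩ := key γ hγ hγΩ
  -- the bound for δ
  have hδbound : |Φ (v (δ B)) - Φ (v (δ A))| ≤
      ∫ t in A..B, φ (v (δ t)) * nGrad u (δ t) * ‖deriv δ t‖ := by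
    rw [← hFTCδ]
    calc |∫ t in A..B, φ (v (δ t)) * fderiv ℝ v (δ t) (deriv δ t)|
        ≤ ∫ t in A..B, |φ (v (δ t)) * fderiv ℝ v (δ t) (deriv δ t)| :=
          intervalIntegral.abs_integral_le_integral_abs hAB
      _ ≤ ∫ t in A..B, φ (v (δ t)) * nGrad u (δ t) * ‖deriv δ t‖ :=
          intervalIntegral.integral_mono_on hAB hintδ1.abs hintδ2 hleδ
  -- the gradient of u is orthogonal to γ'
  have hγderiv0 : ∀ t ∈ Set.Ioo A B, fderiv ℝ u (γ t) (deriv γ t) = 0 := by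
    intro t ht
    have h1 : HasDerivAt (fun s => u (γ s)) (fderiv ℝ u (γ t) (deriv γ t)) t :=
      (huD _ (hγΩ t (Set.Ioo_subset_Icc_self ht))).hasFDerivAt.comp_hasDerivAt t
        ((hγ.differentiable one_ne_zero t).hasDerivAt)
    have h2 : HasDerivAt (fun s => u (γ s)) 0 t := by
      have hev : (fun s => u (γ s)) =ᶠ[nhds t] (fun _ => u (γ A)) := by
        filter_upwards [Ioo_mem_nhds ht.1 ht.2] with s hs
        exact hlevel s (Set.Ioo_subset_Icc_self hs)
      exact (hasDerivAt_const t (u (γ A))).congr_of_eventuallyEq hev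
    exact h1.unique h2
  -- magnitude of the tangential derivative of v along γ
  have hγabs : ∀ t ∈ Set.Ioo A B,
      |fderiv ℝ v (γ t) (deriv γ t)| = nGrad u (γ t) * ‖deriv γ t‖ := by
    intro t ht
    have htI := Set.Ioo_subset_Icc_self ht
    have hz := hγΩ t htI
    obtain ⟨h1, h2⟩ := hCR _ hz
    set p := fderiv ℝ u (γ t) 1 with hp
    set q := fderiv ℝ u (γ t) Complex.I with hq
    set x := (deriv γ t).re with hx
    set y := (deriv γ t).im with hy
    have h0 : x * p + y * q = 0 := by
      have := hγderiv0 t ht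
      rwa [clm_decomp] at this
    have hc : fderiv ℝ v (γ t) (deriv γ t) = x * (-q) + y * p := by
      rw [clm_decomp, h1, h2]
    have hid : (x * (-q) + y * p) ^ 2 + (x * p + y * q) ^ 2
        = (p ^ 2 + q ^ 2) * (x ^ 2 + y ^ 2) := by ring
    rw [h0] at hid
    have hsq : (x * (-q) + y * p) ^ 2 = (p ^ 2 + q ^ 2) * (x ^ 2 + y ^ 2) := by
      nlinarith [hid]
    rw [hc, ← Real.sqrt_sq_eq_abs, hsq, Real.sqrt_mul (by positivity),
      norm_complex_eq]
    simp only [nGrad]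
    rfl
  have hvq : v (δ B) = v (γ B) := by rw [hδB]
  have hvp : v (δ A) = v (γ A) := by rw [hδA]
  rcases hmono with hm | hm
  · -- monotone case: the derivative of v ∘ γ is nonnegative
    have hsign : ∀ t ∈ Set.Ioo A B, 0 ≤ fderiv ℝ v (γ t) (deriv γ t) := fun t ht =>
      deriv_nonneg_of_monotoneOn hm ht (hchainγ t (Set.Ioo_subset_Icc_self ht))
    have heq : ∀ᵐ t : ℝ, t ∈ Set.uIoc A B →
        φ (v (γ t)) * nGrad u (γ t) * ‖deriv γ t‖
          = φ (v (γ t)) * fderiv ℝ v (γ t) (deriv γ t) := by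
      have hB : ∀ᵐ t : ℝ, t ≠ B := by
        rw [ae_iff]
        simp only [not_not, Set.setOf_eq_eq_singleton]
        exact measure_singleton B
      filter_upwards [hB] with t hne htmem
      have htmem' : t ∈ Set.Ioc A B := by rwa [Set.uIoc_of_le hAB] at htmem
      have htIoo : t ∈ Set.Ioo A B := ⟨htmem'.1, lt_of_le_of_ne htmem'.2 hne⟩
      rw [mul_assoc, ← hγabs t htIoo, _root_.abs_of_nonneg (hsign t htIoo)]
    calc (∫ t in A..B, φ (v (γ t)) * nGrad u (γ t) * ‖deriv γ t‖)
        = ∫ t in A..B, φ (v (γ t)) * fderiv ℝ v (γ t) (deriv γ t) :=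
          intervalIntegral.integral_congr_ae heq
      _ = Φ (v (γ B)) - Φ (v (γ A)) := hFTCγ
      _ = Φ (v (δ B)) - Φ (v (δ A)) := by rw [hvq, hvp]
      _ ≤ |Φ (v (δ B)) - Φ (v (δ A))| := le_abs_self _
      _ ≤ _ := hδbound
  · -- antitone case: the derivative of v ∘ γ is nonpositive
    have hsign : ∀ t ∈ Set.Ioo A B, fderiv ℝ v (γ t) (deriv γ t) ≤ 0 := by
      intro t ht
      have hmono' : MonotoneOn (fun s => -(v (γ s))) (Set.Icc A B) := fun a ha b hb hab =>
        neg_le_neg (hm ha hb hab)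
      have := deriv_nonneg_of_monotoneOn hmono' ht
        ((hchainγ t (Set.Ioo_subset_Icc_self ht)).neg)
      linarith
    have heq : ∀ᵐ t : ℝ, t ∈ Set.uIoc A B →
        φ (v (γ t)) * nGrad u (γ t) * ‖deriv γ t‖
          = -(φ (v (γ t)) * fderiv ℝ v (γ t) (deriv γ t)) := by
      have hB : ∀ᵐ t : ℝ, t ≠ B := by
        rw [ae_iff]
        simp only [not_not, Set.setOf_eq_eq_singleton]
        exact measure_singleton B
      filter_upwards [hB] with t hne htmem
      have htmem' : t ∈ Set.Ioc A B := by rwa [Set.uIoc_of_le hAB] at htmem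
      have htIoo : t ∈ Set.Ioo A B := ⟨htmem'.1, lt_of_le_of_ne htmem'.2 hne⟩
      rw [mul_assoc, ← hγabs t htIoo, _root_.abs_of_nonpos (hsign t htIoo)]
      ring
    calc (∫ t in A..B, φ (v (γ t)) * nGrad u (γ t) * ‖deriv γ t‖)
        = ∫ t in A..B, -(φ (v (γ t)) * fderiv ℝ v (γ t) (deriv γ t)) :=
          intervalIntegral.integral_congr_ae heq
      _ = -(Φ (v (γ B)) - Φ (v (γ A))) := by
          rw [intervalIntegral.integral_neg, hFTCγ]
      _ = -(Φ (v (δ B)) - Φ (v (δ A))) := by rw [hvq, hvp]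
      _ ≤ |Φ (v (δ B)) - Φ (v (δ A))| := neg_le_abs _
      _ ≤ _ := hδbound
end

section
/- Let u be a harmonic function on a domain Ω ⊂ ℂ. Away from the critical points of u, the level lines of u are the traces of trajectories of the Newtonian system d²z/dt² = −2∂V/∂z̄ with unit mass and potential energy V = −(1/2)|∇u|²; indeed, every solution of the first-order Hamiltonian equation dz/dt = −2i ∂u/∂z̄ (whose trajectories are level lines of u) solves this Newtonian equation. -/
open Complex Filter Set MeasureTheory

/-!
Write `u_x, u_y` for the partial derivatives of `u`. The Hamiltonian field is
`F = -2i ∂u/∂z̄ = u_y - i u_x`, which is orthogonal to `∇u`, so `u` is constant along its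
trajectories. Differentiating `ż = F(z)` once more gives `z̈ = DF(z) F(z)`, with
components `u_y ∂ₓu_y - u_x ∂_y u_y` and `u_x ∂_y u_x - u_y ∂ₓu_x`; after `Δu = 0`
replaces `∂_y u_y` by `-∂ₓu_x`, these are `-V_x` and `-V_y`. Local trajectories exist
by Picard–Lindelöf, `F` being `C¹`.
-/

open Metric Topology

theorem ContinuousLinearMap.apply_complex_eq {F : Type*} [AddCommGroup F] [Module ℝ F]
    [TopologicalSpace F] (L : ℂ →L[ℝ] F) (c : ℂ) : L c = c.re • L 1 + c.im • L I := by
  have hc : c = c.re • (1 : ℂ) + c.im • I := by simp [real_smul, re_add_im]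
  conv_lhs => rw [hc, map_add, L.map_smul, L.map_smul]

theorem ContDiffAt.exists_forall_mem_Ioo_mem_hasDerivAt {E : Type*} [NormedAddCommGroup E]
    [NormedSpace ℝ E] [CompleteSpace E] {f : E → E} {x₀ : E} {U : Set E}
    (hf : ContDiffAt ℝ 1 f x₀) (hU : U ∈ 𝓝 x₀) :
    ∃ ε > (0 : ℝ), ∃ α : ℝ → E, α 0 = x₀ ∧
      ∀ t ∈ Ioo (-ε) ε, α t ∈ U ∧ HasDerivAt α (f (α t)) t := by
  obtain ⟨α, hα0, ε, hε, hα⟩ :=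
    hf.exists_forall_mem_closedBall_exists_eq_forall_mem_Ioo_hasDerivAt₀ 0
  simp only [zero_sub, zero_add] at hα
  have hαU : ∀ᶠ t in 𝓝 (0 : ℝ), α t ∈ U :=
    (hα 0 ⟨neg_neg_iff_pos.mpr hε, hε⟩).continuousAt.preimage_mem_nhds (hα0 ▸ hU)
  obtain ⟨δ, hδ, hδU⟩ := eventually_nhds_iff_ball.mp hαU
  refine ⟨min ε δ, lt_min hε hδ, α, hα0, fun t ht => ⟨hδU t ?_, hα t ?_⟩⟩
  · rw [Real.ball_eq_Ioo, zero_sub, zero_add]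
    exact Ioo_subset_Ioo (neg_le_neg (min_le_right ε δ)) (min_le_right ε δ) ht
  · exact Ioo_subset_Ioo (neg_le_neg (min_le_left ε δ)) (min_le_left ε δ) ht

section HamiltonianFlow

variable {u : ℂ → ℝ} {w : ℂ}

theorem neg_two_I_mul_wdzbar (u : ℂ → ℝ) (w : ℂ) :
    -2 * I * wdzbar u w = (fderiv ℝ u w I : ℂ) - I * (fderiv ℝ u w 1 : ℂ) := by
  rw [wdzbar]
  linear_combination (-(fderiv ℝ u w I : ℂ)) * I_sq

theorem fderiv_apply_neg_two_I_mul_wdzbar (u : ℂ → ℝ) (w : ℂ) :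
    fderiv ℝ u w (-2 * I * wdzbar u w) = 0 := by
  rw [ContinuousLinearMap.apply_complex_eq, neg_two_I_mul_wdzbar]
  simp only [sub_re, ofReal_re, mul_re, I_re, ofReal_im, I_im, sub_im, mul_im, smul_eq_mul]
  ring

theorem ContDiffAt.contDiffAt_neg_two_I_mul_wdzbar (hu : ContDiffAt ℝ 2 u w) :
    ContDiffAt ℝ 1 (fun x => -2 * I * wdzbar u x) w := by
  have hdu : ContDiffAt ℝ 1 (fderiv ℝ u) w := hu.fderiv_right (by norm_num)
  have hpartial (v : ℂ) : ContDiffAt ℝ 1 (fun x => (fderiv ℝ u x v : ℂ)) w :=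
    ofRealCLM.contDiff.contDiffAt.comp w (hdu.clm_apply contDiffAt_const)
  simp only [neg_two_I_mul_wdzbar]
  exact (hpartial I).sub (contDiffAt_const.mul (hpartial 1))

theorem fderiv_potV_apply (hu : DifferentiableAt ℝ (fderiv ℝ u) w) (v : ℂ) :
    fderiv ℝ (potV u) w v = -(fderiv ℝ u w 1 * fderiv ℝ (fun x => fderiv ℝ u x 1) w v +
      fderiv ℝ u w I * fderiv ℝ (fun x => fderiv ℝ u x I) w v) := by
  have hpartial (e : ℂ) := (hu.clm_apply (differentiableAt_const e)).hasFDerivAt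
  have hV : HasFDerivAt (potV u) _ w :=
    (((hpartial 1).pow 2).add ((hpartial I).pow 2)).const_mul (-(1 / 2) : ℝ)
  rw [hV.fderiv]
  simp only [smul_apply, add_apply, smul_eq_mul]
  ring

theorem hasDerivAt_neg_two_I_mul_wdzbar_comp {z : ℝ → ℂ} {c : ℂ} {t : ℝ}
    (hu : DifferentiableAt ℝ (fderiv ℝ u) (z t)) (hz : HasDerivAt z c t) :
    HasDerivAt (fun s => -2 * I * wdzbar u (z s))
      ((fderiv ℝ (fun x => fderiv ℝ u x I) (z t) c : ℂ) -
        I * (fderiv ℝ (fun x => fderiv ℝ u x 1) (z t) c : ℂ)) t := by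
  have hpartial (e : ℂ) : HasDerivAt (fun s => (fderiv ℝ u (z s) e : ℂ))
      (fderiv ℝ (fun x => fderiv ℝ u x e) (z t) c : ℂ) t :=
    ((hu.clm_apply (differentiableAt_const e)).hasFDerivAt.comp_hasDerivAt t hz).ofReal_comp
  simp only [neg_two_I_mul_wdzbar]
  exact (hpartial I).sub ((hpartial 1).const_mul I)

theorem hasDerivAt_neg_two_I_mul_wdzbar_comp_eq_newton {z : ℝ → ℂ} {t : ℝ}
    (hu : DifferentiableAt ℝ (fderiv ℝ u) (z t)) (hlap : lap2 u (z t) = 0)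
    (hz : HasDerivAt z (-2 * I * wdzbar u (z t)) t) :
    HasDerivAt (fun s => -2 * I * wdzbar u (z s)) (-2 * wdzbar (potV u) (z t)) t := by
  convert hasDerivAt_neg_two_I_mul_wdzbar_comp hu hz using 1
  rw [wdzbar, fderiv_potV_apply hu, fderiv_potV_apply hu]
  set DP := fderiv ℝ (fun x => fderiv ℝ u x 1) (z t)
  set DQ := fderiv ℝ (fun x => fderiv ℝ u x I) (z t)
  have hDQ : DQ I = -DP 1 := eq_neg_of_add_eq_zero_right hlap
  rw [DP.apply_complex_eq (-2 * I * _), DQ.apply_complex_eq (-2 * I * _), neg_two_I_mul_wdzbar,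
    hDQ]
  simp only [sub_re, ofReal_re, mul_re, I_re, ofReal_im, I_im, sub_im, mul_im, smul_eq_mul]
  push_cast
  ring

end HamiltonianFlow

section Trajectories

variable {u : ℂ → ℝ} {z : ℝ → ℂ} {s : Set ℝ}

theorem IsOpen.apply_comp_eq_of_hamiltonian (hs : IsOpen s) (hs' : IsPreconnected s)
    (hu : ∀ t ∈ s, DifferentiableAt ℝ u (z t))
    (hz : ∀ t ∈ s, HasDerivAt z (-2 * I * wdzbar u (z t)) t) {t t' : ℝ} (ht : t ∈ s)
    (ht' : t' ∈ s) : u (z t) = u (z t') := by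
  have hlevel : ∀ t ∈ s, HasDerivAt (fun r => u (z r)) 0 t := fun t ht =>
    fderiv_apply_neg_two_I_mul_wdzbar u (z t) ▸ (hu t ht).hasFDerivAt.comp_hasDerivAt t (hz t ht)
  exact hs.is_const_of_deriv_eq_zero hs'
    (fun t ht => (hlevel t ht).differentiableAt.differentiableWithinAt)
    (fun t ht => (hlevel t ht).deriv) ht ht'

theorem HarmOn.hasDerivAt_deriv_of_hamiltonian {Ω : Set ℂ} (hΩ : IsOpen Ω) (hu : HarmOn u Ω)
    (hs : IsOpen s) (hzΩ : ∀ t ∈ s, z t ∈ Ω)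
    (hz : ∀ t ∈ s, HasDerivAt z (-2 * I * wdzbar u (z t)) t) {t : ℝ} (ht : t ∈ s) :
    HasDerivAt (deriv z) (-2 * wdzbar (potV u) (z t)) t := by
  have hu2 : DifferentiableAt ℝ (fderiv ℝ u) (z t) :=
    ((hu.1.contDiffAt (hΩ.mem_nhds (hzΩ t ht))).fderiv_right (m := 1) le_rfl).differentiableAt
      one_ne_zero
  refine (hasDerivAt_neg_two_I_mul_wdzbar_comp_eq_newton hu2 (hu.2 _ (hzΩ t ht)) (hz t ht)
    ).congr_of_eventuallyEq ?_
  filter_upwards [hs.mem_nhds ht] with r hr using (hz r hr).deriv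

theorem HarmOn.newtonian_of_hamiltonian {Ω : Set ℂ} (hΩ : IsOpen Ω) (hu : HarmOn u Ω)
    (hs : IsOpen s) (hs' : IsPreconnected s) (hzΩ : ∀ t ∈ s, z t ∈ Ω)
    (hz : ∀ t ∈ s, HasDerivAt z (-2 * I * wdzbar u (z t)) t) :
    (∀ t ∈ s, ∀ t' ∈ s, u (z t) = u (z t')) ∧
      ∀ t ∈ s, HasDerivAt (deriv z) (-2 * wdzbar (potV u) (z t)) t :=
  ⟨fun _ ht _ ht' => hs.apply_comp_eq_of_hamiltonian hs'
      (fun t ht => (hu.1.contDiffAt (hΩ.mem_nhds (hzΩ t ht))).differentiableAt two_ne_zero)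
      hz ht ht',
    fun _ ht => hu.hasDerivAt_deriv_of_hamiltonian hΩ hs hzΩ hz ht⟩

end Trajectories

/-- Let `u` be harmonic on `Ω ⊆ ℂ`. Every solution of the Hamiltonian
equation `dz/dt = -2i·∂u/∂z̄` stays on a level line of `u` and solves the Newtonian
equation `d²z/dt² = -2·∂V/∂z̄` with potential `V = -(1/2)|∇u|²`; moreover through every
point of `Ω` there is locally such a trajectory, so that away from critical points the
level lines of `u` are traces of trajectories of this Newtonian system. -/
theorem level_lines_newtonian
    (Ω : Set ℂ) (u : ℂ → ℝ)
    (hopen : IsOpen Ω) (hu : HarmOn u Ω) :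
    (∀ z : ℝ → ℂ, (∀ t, z t ∈ Ω) →
      (∀ t, HasDerivAt z (-2 * Complex.I * wdzbar u (z t)) t) →
      (∀ t, u (z t) = u (z 0)) ∧
        ∀ t, HasDerivAt (deriv z) (-2 * wdzbar (potV u) (z t)) t) ∧
    (∀ z₀ ∈ Ω, ∃ ε > (0:ℝ), ∃ z : ℝ → ℂ, z 0 = z₀ ∧
      ∀ t ∈ Set.Ioo (-ε) ε, z t ∈ Ω ∧
        HasDerivAt z (-2 * Complex.I * wdzbar u (z t)) t ∧
        u (z t) = u z₀ ∧
        HasDerivAt (deriv z) (-2 * wdzbar (potV u) (z t)) t) := by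
  refine ⟨fun z hzΩ hz => ?_, fun z₀ hz₀ => ?_⟩
  · obtain ⟨hlevel, hnewton⟩ := hu.newtonian_of_hamiltonian hopen isOpen_univ isPreconnected_univ
      (fun t _ => hzΩ t) (fun t _ => hz t)
    exact ⟨fun t => hlevel t trivial 0 trivial, fun t => hnewton t trivial⟩
  · have hΩ := hopen.mem_nhds hz₀
    obtain ⟨ε, hε, z, hz0, hz⟩ := (hu.1.contDiffAt hΩ).contDiffAt_neg_two_I_mul_wdzbar
      |>.exists_forall_mem_Ioo_mem_hasDerivAt hΩ
    obtain ⟨hlevel, hnewton⟩ := hu.newtonian_of_hamiltonian hopen isOpen_Ioo isPreconnected_Ioo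
      (fun t ht => (hz t ht).1) (fun t ht => (hz t ht).2)
    have h0 : (0 : ℝ) ∈ Ioo (-ε) ε := ⟨neg_neg_iff_pos.mpr hε, hε⟩
    exact ⟨ε, hε, z, hz0, fun t ht =>
      ⟨(hz t ht).1, (hz t ht).2, hz0 ▸ hlevel t ht 0 h0, hnewton t ht⟩⟩
end

section
/- Let u be a harmonic function on a domain Ω ⊂ ℂ with harmonic conjugate u*, and set f = u + iu* (conformal away from critical points of u). Consider the Hamiltonian system on Ω×ℂ with Hamiltonian H = (1/2)|p|² − (1/2)|∇u(q)|² (kinetic plus potential energy V = −(1/2)|∇u|²). Then the traces in Ω of the trajectories lying on the zero-energy surface H = 0 are exactly the inverse images under the conformal map w = f(z) of the straight lines in the w-plane. -/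
open Complex Filter Set MeasureTheory

/-! With `f = u + i v` holomorphic and `g = f' = 2 ∂u/∂z`, the force is
`-2 ∂V/∂q̄ = g(q) · conj (g'(q))` and zero energy means `|p| = |g(q)|`. Along a trajectory the
image curve `f ∘ q` has velocity `r = g(q) p`, and these two facts make `conj r · r'` real:
the image curve has zero curvature, so it is a straight line. Conversely, for `|e| = 1` the
solution of `q' = e · conj (g(q))` is a zero-energy trajectory whose image moves with velocity
`e |g(q)|²`, i.e. along the line through `f(q(0))` in direction `e`. -/

open ComplexConjugate

section PlaneCurves

lemma exists_eq_real_mul_of_im_conj_mul_eq_zero {c ξ : ℂ} (hc : c ≠ 0)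
    (h : (conj c * ξ).im = 0) : ∃ s : ℝ, ξ = s * c := by
  refine ⟨(conj c * ξ).re / normSq c, ?_⟩
  have hreal : conj c * ξ = ((conj c * ξ).re : ℂ) := Complex.ext (by simp) (by simpa using h)
  have hN : (normSq c : ℂ) ≠ 0 := by exact_mod_cast (normSq_pos.mpr hc).ne'
  rw [ofReal_div, div_mul_eq_mul_div, eq_div_iff hN, ← mul_conj]
  linear_combination c * hreal

lemma exists_eq_add_real_mul_of_im_conj_mul_deriv_eq_zero {w w' : ℝ → ℂ} {s : Set ℝ}
    (hs : IsOpen s) (hs' : IsPreconnected s) (hw : ∀ t ∈ s, HasDerivAt w (w' t) t)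
    {c : ℂ} (hc : c ≠ 0) (h : ∀ t ∈ s, (conj c * w' t).im = 0) {a b : ℝ} (ha : a ∈ s)
    (hb : b ∈ s) : ∃ x : ℝ, w b = w a + x * c := by
  have hΦ : ∀ t ∈ s, HasDerivAt (fun t => (conj c * (w t - w a)).im) 0 t := fun t ht =>
    (imCLM.hasFDerivAt.comp_hasDerivAt t
      (((hw t ht).sub_const (w a)).const_mul (conj c))).congr_deriv (h t ht)
  have hconst := hs.is_const_of_deriv_eq_zero hs'
    (fun t ht => (hΦ t ht).differentiableAt.differentiableWithinAt)
    (fun t ht => (hΦ t ht).deriv) hb ha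
  obtain ⟨x, hx⟩ := exists_eq_real_mul_of_im_conj_mul_eq_zero (ξ := w b - w a) hc
    (by simpa using hconst)
  exact ⟨x, by rw [← hx]; ring⟩

lemma im_conj_mul_eq_zero_of_im_conj_mul_deriv_eq_zero {r r' : ℝ → ℂ}
    (hr : ∀ t, HasDerivAt r (r' t) t) (hr0 : ∀ t, r t ≠ 0)
    (h : ∀ t, (conj (r t) * r' t).im = 0) (a b : ℝ) : (conj (r a) * r b).im = 0 := by
  -- `r / conj r = (r / |r|)²` only sees the direction of `r`
  have hdir : ∀ t, HasDerivAt (fun t => r t / conj (r t)) 0 t := fun t => by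
    have hreal : r' t * conj (r t) = r t * conj (r' t) := by
      have := conj_eq_iff_im.mpr (h t)
      simp only [map_mul, conj_conj] at this
      linear_combination -this
    have hd := (hr t).fun_div (hr t).star (by simpa using hr0 t)
    rwa [star_def, hreal, sub_self, zero_div] at hd
  have hconst := is_const_of_deriv_eq_zero (fun t => (hdir t).differentiableAt)
    (fun t => (hdir t).deriv) a b
  rw [div_eq_div_iff (by simpa using hr0 a) (by simpa using hr0 b)] at hconst
  apply conj_eq_iff_im.mp
  simp only [map_mul, conj_conj]
  linear_combination hconst

lemma exists_line_of_im_conj_deriv_mul_deriv2_eq_zero {w r r' : ℝ → ℂ}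
    (hw : ∀ t, HasDerivAt w (r t) t) (hr : ∀ t, HasDerivAt r (r' t) t) (hr0 : ∀ t, r t ≠ 0)
    (h : ∀ t, (conj (r t) * r' t).im = 0) :
    ∃ w₀ c : ℂ, c ≠ 0 ∧ ∀ t, ∃ s : ℝ, w t = w₀ + s * c :=
  ⟨w 0, r 0, hr0 0, fun t =>
    exists_eq_add_real_mul_of_im_conj_mul_deriv_eq_zero isOpen_univ isPreconnected_univ
      (fun t _ => hw t) (hr0 0)
      (fun t _ => im_conj_mul_eq_zero_of_im_conj_mul_deriv_eq_zero hr hr0 h 0 t)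
      (mem_univ 0) (mem_univ t)⟩

end PlaneCurves

section Holomorphic

variable {u v : ℂ → ℝ} {g : ℂ → ℂ} {z : ℂ}

lemma hasDerivAt_ofReal_add_I_mul_of_cauchyRiemann (hu : DifferentiableAt ℝ u z)
    (hv : DifferentiableAt ℝ v z) (hCR₁ : fderiv ℝ v z 1 = -fderiv ℝ u z I)
    (hCR₂ : fderiv ℝ v z I = fderiv ℝ u z 1) :
    HasDerivAt (fun z => (u z : ℂ) + I * v z) (2 * wdz u z) z := by
  set f' : ℂ →L[ℝ] ℂ := ofRealCLM.comp (fderiv ℝ u z) + I • ofRealCLM.comp (fderiv ℝ v z)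
  have hf : HasFDerivAt (fun z => (u z : ℂ) + I * v z) f' z :=
    (ofRealCLM.hasFDerivAt.comp z hu.hasFDerivAt).add
      ((ofRealCLM.hasFDerivAt.comp z hv.hasFDerivAt).const_mul I)
  have hI : f' I = I • f' 1 := by
    simp only [f', add_apply, ContinuousLinearMap.comp_apply, ofRealCLM_apply, smul_apply,
      smul_eq_mul, hCR₁, hCR₂, ofReal_neg, mul_neg]
    linear_combination ((fderiv ℝ u z I : ℝ) : ℂ) * I_sq
  refine (hf.complexOfReal_hasFDerivAt hI).hasDerivAt.congr_deriv ?_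
  show f' 1 = 2 * wdz u z
  simp only [f', wdz, add_apply, ContinuousLinearMap.comp_apply, ofRealCLM_apply, smul_apply,
    smul_eq_mul, hCR₁, ofReal_neg, mul_neg]
  ring

lemma differentiableOn_of_forall_hasDerivAt {f : ℂ → ℂ} {Ω : Set ℂ} (hΩ : IsOpen Ω)
    (hf : ∀ z ∈ Ω, HasDerivAt f (g z) z) : DifferentiableOn ℂ g Ω := by
  have hf' : DifferentiableOn ℂ f Ω := fun z hz => (hf z hz).differentiableAt.differentiableWithinAt
  exact (hf'.deriv hΩ).congr fun z hz => (hf z hz).deriv.symm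

lemma wdzbar_const_mul {f : ℂ → ℝ} (hf : DifferentiableAt ℝ f z) (c : ℝ) :
    wdzbar (fun w => c * f w) z = c * wdzbar f z := by
  simp only [wdzbar, fderiv_const_mul hf, smul_apply, smul_eq_mul, ofReal_mul]
  ring

lemma wdzbar_norm_sq (hg : DifferentiableAt ℂ g z) :
    wdzbar (fun w => ‖g w‖ ^ 2) z = g z * conj (deriv g z) := by
  rw [wdzbar, hg.hasDerivAt.complexToReal_fderiv.norm_sq.fderiv]
  simp only [smul_apply, ContinuousLinearMap.comp_apply, one_apply_eq_self, smul_eq_mul, mul_one,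
    coe_innerSL_apply, Complex.inner, mul_re, conj_re, conj_im, mul_neg, sub_neg_eq_add, smul_add,
    nsmul_eq_mul, Nat.cast_ofNat, ofReal_add, ofReal_mul, ofReal_ofNat, I_re, mul_zero, I_im,
    zero_sub, neg_mul, mul_im, add_zero, smul_neg, ofReal_neg, Complex.ext_iff, div_ofNat_re,
    add_re, re_ofNat, ofReal_re, ofReal_im, sub_zero, im_ofNat, zero_mul, neg_re, add_im, neg_im,
    neg_zero, sub_self, div_ofNat_im, one_mul, zero_add]
  constructor <;> ring

lemma norm_two_wdz_sq (u : ℂ → ℝ) (z : ℂ) :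
    ‖2 * wdz u z‖ ^ 2 = fderiv ℝ u z 1 ^ 2 + fderiv ℝ u z I ^ 2 := by
  rw [wdz, mul_div_cancel₀ _ two_ne_zero, ← normSq_eq_norm_sq]
  simp only [normSq_apply, sub_re, sub_im, mul_re, mul_im, I_re, I_im, ofReal_re, ofReal_im]
  ring

lemma potV_eq_neg_half_norm_sq (u : ℂ → ℝ) :
    potV u = fun z => -(1 / 2) * ‖2 * wdz u z‖ ^ 2 :=
  funext fun z => by rw [potV, norm_two_wdz_sq]

lemma neg_two_mul_wdzbar_potV (hdu : DifferentiableAt ℂ (fun z => 2 * wdz u z) z) :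
    -2 * wdzbar (potV u) z = 2 * wdz u z * conj (deriv (fun z => 2 * wdz u z) z) := by
  rw [potV_eq_neg_half_norm_sq, wdzbar_const_mul ((hdu.restrictScalars ℝ).norm_sq ℝ),
    wdzbar_norm_sq hdu]
  push_cast
  ring

end Holomorphic

lemma ContDiffAt.exists_eq_forall_mem_Ioo_mem_hasDerivAt {E : Type*} [NormedAddCommGroup E]
    [NormedSpace ℝ E] [CompleteSpace E] {V : E → E} {x₀ : E} {s : Set E}
    (hV : ContDiffAt ℝ 1 V x₀) (hs : s ∈ nhds x₀) :
    ∃ ε > (0 : ℝ), ∃ α : ℝ → E, α 0 = x₀ ∧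
      ∀ t ∈ Ioo (-ε) ε, α t ∈ s ∧ HasDerivAt α (V (α t)) t := by
  obtain ⟨α, hα0, ε₀, hε₀, hα⟩ :=
    hV.exists_forall_mem_closedBall_exists_eq_forall_mem_Ioo_hasDerivAt₀ 0
  have hcont : ContinuousAt α 0 := (hα 0 (by simpa using hε₀)).continuousAt
  obtain ⟨δ, hδ, hball⟩ := Metric.mem_nhds_iff.mp (hcont.preimage_mem_nhds (hα0 ▸ hs))
  have hε₀δ := min_le_left ε₀ δ
  have hδε₀ := min_le_right ε₀ δ
  refine ⟨min ε₀ δ, lt_min hε₀ hδ, α, hα0, fun t ⟨ht₁, ht₂⟩ => ⟨hball ?_, hα t ⟨?_, ?_⟩⟩⟩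
  · rw [Metric.mem_ball, Real.dist_0_eq_abs, abs_lt]
    constructor <;> linarith
  all_goals linarith

section ZeroEnergy

variable {Ω : Set ℂ} {f g : ℂ → ℂ}

theorem exists_line_of_zero_energy {q p : ℝ → ℂ} (hΩ : IsOpen Ω)
    (hf : ∀ z ∈ Ω, HasDerivAt f (g z) z) (hqΩ : ∀ t, q t ∈ Ω)
    (hq : ∀ t, HasDerivAt q (p t) t)
    (hp : ∀ t, HasDerivAt p (g (q t) * conj (deriv g (q t))) t)
    (hE : ∀ t, ‖p t‖ = ‖g (q t)‖) (hp0 : ∀ t, p t ≠ 0) :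
    ∃ w₀ c : ℂ, c ≠ 0 ∧ ∀ t, ∃ s : ℝ, f (q t) = w₀ + s * c := by
  have hg := differentiableOn_of_forall_hasDerivAt hΩ hf
  have hgq : ∀ t, HasDerivAt (fun t => g (q t)) (deriv g (q t) * p t) t := fun t =>
    (hg.differentiableAt (hΩ.mem_nhds (hqΩ t))).hasDerivAt.comp t (hq t)
  refine exists_line_of_im_conj_deriv_mul_deriv2_eq_zero (fun t => (hf _ (hqΩ t)).comp t (hq t))
    (fun t => (hgq t).mul (hp t)) (fun t => mul_ne_zero ?_ (hp0 t)) (fun t => ?_)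
  · rw [← norm_ne_zero_iff, ← hE t, norm_ne_zero_iff]
    exact hp0 t
  set G := g (q t)
  set G' := deriv g (q t)
  set P := p t
  have hPP : P * conj P = G * conj G := by
    rw [mul_conj, mul_conj, normSq_eq_norm_sq, normSq_eq_norm_sq, hE t]
  have hsplit : conj (G * P) * (G' * P * P + G * (G * conj G'))
      = G * conj G * (conj G * G' * P + conj (conj G * G' * P)) := by
    simp only [map_mul, conj_conj]
    linear_combination (conj G * G' * P) * hPP
  rw [hsplit, mul_conj, add_conj, ← ofReal_mul, ofReal_im]

theorem exists_zero_energy_trajectory_mem_line (hΩ : IsOpen Ω)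
    (hf : ∀ z ∈ Ω, HasDerivAt f (g z) z) {z₀ : ℂ} (hz₀ : z₀ ∈ Ω) {e : ℂ} (he : ‖e‖ = 1) :
    ∃ ε > (0 : ℝ), ∃ q : ℝ → ℂ, q 0 = z₀ ∧ ∀ t ∈ Ioo (-ε) ε, q t ∈ Ω ∧
      HasDerivAt q (e * conj (g (q t))) t ∧
      HasDerivAt (fun t => e * conj (g (q t))) (g (q t) * conj (deriv g (q t))) t ∧
      ∃ s : ℝ, f (q t) = f z₀ + s * e := by
  have hg := differentiableOn_of_forall_hasDerivAt hΩ hf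
  have hV : ContDiffAt ℝ 1 (fun z => e * conj (g z)) z₀ :=
    contDiffAt_const.mul (conjCLE.contDiff.contDiffAt.comp z₀
      ((hg.analyticAt (hΩ.mem_nhds hz₀)).contDiffAt.restrict_scalars ℝ))
  obtain ⟨ε, hε, q, hq0, hq⟩ := hV.exists_eq_forall_mem_Ioo_mem_hasDerivAt (hΩ.mem_nhds hz₀)
  have hee : conj e * e = 1 := by
    rw [mul_comm, mul_conj, normSq_eq_norm_sq, he]
    norm_num
  have hfq : ∀ t ∈ Ioo (-ε) ε, HasDerivAt (fun t => f (q t)) (g (q t) * (e * conj (g (q t)))) t :=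
    fun t ht => (hf _ (hq t ht).1).comp t (hq t ht).2
  refine ⟨ε, hε, q, hq0, fun t ht => ⟨(hq t ht).1, (hq t ht).2, ?_, ?_⟩⟩
  · have hgq : HasDerivAt (fun t => g (q t)) (deriv g (q t) * (e * conj (g (q t)))) t :=
      (hg.differentiableAt (hΩ.mem_nhds (hq t ht).1)).hasDerivAt.comp t (hq t ht).2
    refine (hgq.star.const_mul e).congr_deriv ?_
    simp only [star_def, map_mul, conj_conj]
    linear_combination (g (q t) * conj (deriv g (q t))) * hee
  · have hdir : ∀ t ∈ Ioo (-ε) ε, (conj e * (g (q t) * (e * conj (g (q t))))).im = 0 :=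
      fun t _ => by
        rw [show conj e * (g (q t) * (e * conj (g (q t))))
            = conj e * e * (g (q t) * conj (g (q t))) by ring, hee, one_mul, mul_conj, ofReal_im]
    obtain ⟨s, hs⟩ := exists_eq_add_real_mul_of_im_conj_mul_deriv_eq_zero isOpen_Ioo
      isPreconnected_Ioo hfq (norm_ne_zero_iff.mp (he ▸ one_ne_zero)) hdir
      ⟨neg_lt_zero.mpr hε, hε⟩ ht
    exact ⟨s, by rwa [hq0] at hs⟩

end ZeroEnergy

/-- Let `u` be harmonic on `Ω` with harmonic conjugate `v`, and
`f = u + iv`. For the Hamiltonian system `dq/dt = p`, `dp/dt = -2∂V/∂q̄` with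
`H = (1/2)|p|² + V(q)`, `V = -(1/2)|∇u|²`, the traces in `Ω` of trajectories on the
zero-energy surface `H = 0` are exactly the inverse images under `w = f(z)` of the
straight lines in the `w`-plane: every moving zero-energy trajectory is mapped by `f`
into a straight line, and conversely through every noncritical point there is a
zero-energy trajectory mapped by `f` into any prescribed line through its image. -/
theorem zero_energy_trajectories
    (Ω : Set ℂ) (u v : ℂ → ℝ)
    (hopen : IsOpen Ω) (hu : HarmOn u Ω)
    (hv : ContDiffOn ℝ 1 v Ω)
    (hCR : ∀ z ∈ Ω, fderiv ℝ v z 1 = -(fderiv ℝ u z Complex.I) ∧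
      fderiv ℝ v z Complex.I = fderiv ℝ u z 1) :
    (∀ q p : ℝ → ℂ, (∀ t, q t ∈ Ω) →
      (∀ t, HasDerivAt q (p t) t) →
      (∀ t, HasDerivAt p (-2 * wdzbar (potV u) (q t)) t) →
      (∀ t, (1 / 2) * ‖p t‖ ^ 2 + potV u (q t) = 0) →
      (∀ t, p t ≠ 0) →
      ∃ w₀ dir : ℂ, dir ≠ 0 ∧
        ∀ t, ∃ s : ℝ, ((u (q t) : ℝ) : ℂ) + Complex.I * ((v (q t) : ℝ) : ℂ)
          = w₀ + (s : ℂ) * dir) ∧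
    (∀ z₀ ∈ Ω, wdz u z₀ ≠ 0 → ∀ dir : ℂ, dir ≠ 0 →
      ∃ ε > (0:ℝ), ∃ q p : ℝ → ℂ, q 0 = z₀ ∧
        ∀ t ∈ Set.Ioo (-ε) ε, q t ∈ Ω ∧
          HasDerivAt q (p t) t ∧
          HasDerivAt p (-2 * wdzbar (potV u) (q t)) t ∧
          (1 / 2) * ‖p t‖ ^ 2 + potV u (q t) = 0 ∧
          ∃ s : ℝ, ((u (q t) : ℝ) : ℂ) + Complex.I * ((v (q t) : ℝ) : ℂ)
            = (((u z₀ : ℝ) : ℂ) + Complex.I * ((v z₀ : ℝ) : ℂ)) + (s : ℂ) * dir) := by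
  have hf : ∀ z ∈ Ω, HasDerivAt (fun z => (u z : ℂ) + I * v z) (2 * wdz u z) z := fun z hz =>
    hasDerivAt_ofReal_add_I_mul_of_cauchyRiemann
      ((hu.1.differentiableOn (by norm_num)).differentiableAt (hopen.mem_nhds hz))
      ((hv.differentiableOn one_ne_zero).differentiableAt (hopen.mem_nhds hz))
      (hCR z hz).1 (hCR z hz).2
  have hg := differentiableOn_of_forall_hasDerivAt hopen hf
  have hforce : ∀ z ∈ Ω, -2 * wdzbar (potV u) z
      = 2 * wdz u z * conj (deriv (fun z => 2 * wdz u z) z) := fun z hz =>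
    neg_two_mul_wdzbar_potV (hg.differentiableAt (hopen.mem_nhds hz))
  have henergy : ∀ z (p : ℂ), (1 / 2) * ‖p‖ ^ 2 + potV u z = 0 ↔ ‖p‖ = ‖2 * wdz u z‖ :=
    fun z p => by
      rw [potV_eq_neg_half_norm_sq, ← sq_eq_sq₀ (norm_nonneg _) (norm_nonneg _)]
      constructor <;> intro h <;> linarith
  refine ⟨fun q p hqΩ hq hp hE hp0 => ?_, fun z₀ hz₀ _ dir hdir => ?_⟩
  · exact exists_line_of_zero_energy hopen hf hqΩ hq (fun t => hforce _ (hqΩ t) ▸ hp t)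
      (fun t => (henergy _ _).mp (hE t)) hp0
  set e : ℂ := (‖dir‖⁻¹ : ℝ) * dir with he_def
  have he : ‖e‖ = 1 := by
    simp [he_def, inv_mul_cancel₀ (norm_ne_zero_iff.mpr hdir)]
  obtain ⟨ε, hε, q, hq0, hq⟩ := exists_zero_energy_trajectory_mem_line hopen hf hz₀ he
  refine ⟨ε, hε, q, fun t => e * conj (2 * wdz u (q t)), hq0, fun t ht => ?_⟩
  obtain ⟨hqΩ, hq', hp', s, hs⟩ := hq t ht
  refine ⟨hqΩ, hq', (hforce _ hqΩ).symm ▸ hp',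
    (henergy _ _).mpr (by rw [norm_mul, he, one_mul, norm_conj]), s * ‖dir‖⁻¹, ?_⟩
  rw [hs, he_def]
  push_cast
  ring
end

section
/- Bol's lemma: Let f(t) = (at+b)/(ct+d) with ad − bc = 1 be a Möbius transformation, and set λ(t) = (ct+d)^{-1}, so that f′(t) = λ(t)². Then for every smooth function F and every positive integer m: (d^m/dt^m)[F(f(t))·λ(t)^{1−m}] = F^{(m)}(f(t))·λ(t)^{1+m}, where F^{(m)} denotes the m-th derivative of F. (For m = 1 this is the ordinary chain rule; for m ≥ 2 it holds only for Möbius transformations.) -/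
open Complex Filter Set MeasureTheory

/-!
Write `w(s) = cs + d` and `f(s) = (as + b)/w(s)`; then `f' = 1/w²` because `ad - bc = 1`.
Induct on `m` for `Φₘ = wᵐ · (F ∘ f)/w`, proving `Φₘ⁽ᵐ⁾ = (F⁽ᵐ⁾ ∘ f)/wᵐ⁺¹`. Since `w` is affine,
Leibniz's rule reads `(w·Φ)⁽ᵐ⁺¹⁾ = w·Φ⁽ᵐ⁺¹⁾ + (m+1)c·Φ⁽ᵐ⁾`. Taking `Φ = Φₘ`, the derivative of
`1/wᵐ⁺¹` in `Φₘ⁽ᵐ⁺¹⁾` contributes `-(m+1)c·(F⁽ᵐ⁾ ∘ f)/wᵐ⁺¹` to the first term, which cancels the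
second, while differentiating `F⁽ᵐ⁾ ∘ f` contributes `w·(F⁽ᵐ⁺¹⁾ ∘ f)·f'/wᵐ⁺¹ = (F⁽ᵐ⁺¹⁾ ∘ f)/wᵐ⁺²`.
-/

open Topology

section Affine

variable {𝕜 : Type*} [NontriviallyNormedField 𝕜]

theorem hasDerivAt_affine (c d t : 𝕜) : HasDerivAt (fun s => c * s + d) c t := by
  simpa using ((hasDerivAt_id t).const_mul c).add_const d

theorem iteratedDeriv_affine_of_two_le (c d x : 𝕜) {n : ℕ} (hn : 2 ≤ n) :
    iteratedDeriv n (fun s => c * s + d) x = 0 := by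
  obtain ⟨n, rfl⟩ := Nat.exists_eq_add_of_le' hn
  simp [iteratedDeriv_succ']

theorem iteratedDeriv_succ_affine_mul {g : 𝕜 → 𝕜} {x : 𝕜} {n : ℕ}
    (hg : ContDiffAt 𝕜 (n + 1) g x) (c d : 𝕜) :
    iteratedDeriv (n + 1) (fun s => (c * s + d) * g s) x =
      (c * x + d) * iteratedDeriv (n + 1) g x + (n + 1) * c * iteratedDeriv n g x := by
  rw [iteratedDeriv_fun_mul (by fun_prop) hg, Finset.sum_range_succ', Finset.sum_range_succ',
    Finset.sum_eq_zero fun i _ => by rw [iteratedDeriv_affine_of_two_le c d x (by omega)]; ring]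
  simp only [zero_add, Nat.choose_zero_right, Nat.choose_one_right, Nat.cast_add, Nat.cast_one,
    iteratedDeriv_zero, iteratedDeriv_succ, deriv_add_const', deriv_const_mul_id',
    add_tsub_cancel_right, tsub_zero, one_mul]
  ring

end Affine

open scoped ContDiff

section Moebius

variable {𝕜 : Type*} [NontriviallyNormedField 𝕜] {a b c d t : 𝕜}

theorem hasDerivAt_moebius (h : a * d - b * c = 1) (ht : c * t + d ≠ 0) :
    HasDerivAt (fun s => (a * s + b) / (c * s + d)) (1 / (c * t + d) ^ 2) t :=
  ((hasDerivAt_affine a b t).fun_div (hasDerivAt_affine c d t) ht).congr_deriv <| by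
    rw [← h]
    ring

theorem hasDerivAt_comp_moebius_div_pow {G : 𝕜 → 𝕜} (hG : Differentiable 𝕜 G) (n : ℕ)
    (h : a * d - b * c = 1) (ht : c * t + d ≠ 0) :
    HasDerivAt (fun s => G ((a * s + b) / (c * s + d)) / (c * s + d) ^ n)
      (deriv G ((a * t + b) / (c * t + d)) / (c * t + d) ^ (n + 2)
        - n * c * G ((a * t + b) / (c * t + d)) / (c * t + d) ^ (n + 1)) t := by
  have hGf : HasDerivAt (fun s => G ((a * s + b) / (c * s + d)))
      (deriv G ((a * t + b) / (c * t + d)) * (1 / (c * t + d) ^ 2)) t :=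
    (hG _).hasDerivAt.comp t (hasDerivAt_moebius h ht)
  refine (hGf.fun_div ((hasDerivAt_affine c d t).fun_pow n) (pow_ne_zero n ht)).congr_deriv ?_
  generalize (a * t + b) / (c * t + d) = x
  rcases n with _ | n
  · norm_num [div_eq_mul_inv, pow_succ]
  · rw [Nat.add_sub_cancel]
    field_simp
    push_cast
    ring

theorem iteratedDeriv_pow_mul_comp_moebius_div {F : 𝕜 → 𝕜} (hF : ContDiff 𝕜 ∞ F)
    (h : a * d - b * c = 1) (m : ℕ) (ht : c * t + d ≠ 0) :
    iteratedDeriv m (fun s => (c * s + d) ^ m * (F ((a * s + b) / (c * s + d)) / (c * s + d))) t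
      = iteratedDeriv m F ((a * t + b) / (c * t + d)) / (c * t + d) ^ (m + 1) := by
  induction m generalizing t with
  | zero => simp
  | succ m ih =>
    have hw_ne : ∀ᶠ s in 𝓝 t, c * s + d ≠ 0 :=
      (hasDerivAt_affine c d t).continuousAt.eventually_ne ht
    have hF' : ContDiff 𝕜 (m + 1) F := hF.of_le (by exact_mod_cast le_top)
    have hsmooth : ContDiffAt 𝕜 (m + 1)
        (fun s => (c * s + d) ^ m * (F ((a * s + b) / (c * s + d)) / (c * s + d))) t := by
      fun_prop (disch := assumption)
    have hderiv := hasDerivAt_comp_moebius_div_pow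
      (hF'.differentiable_iteratedDeriv' m) (m + 1) h ht
    calc _ = iteratedDeriv (m + 1) (fun s => (c * s + d) *
          ((c * s + d) ^ m * (F ((a * s + b) / (c * s + d)) / (c * s + d)))) t := by
          congr 2
          funext s
          ring
      _ = (c * t + d) * deriv (fun s => iteratedDeriv m F ((a * s + b) / (c * s + d)) /
              (c * s + d) ^ (m + 1)) t
            + (m + 1) * c *
              (iteratedDeriv m F ((a * t + b) / (c * t + d)) / (c * t + d) ^ (m + 1)) := by
          rw [iteratedDeriv_succ_affine_mul hsmooth, iteratedDeriv_succ, ih ht,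
            EventuallyEq.deriv_eq (hw_ne.mono fun s hs => ih hs)]
      _ = _ := by
          rw [hderiv.deriv, iteratedDeriv_succ]
          field_simp
          push_cast
          ring

end Moebius

theorem bol_lemma_general
    (a b c d : ℂ) (h : a * d - b * c = 1)
    (F : ℂ → ℂ) (hF : Differentiable ℂ F)
    (m : ℕ) (t : ℂ) (ht : c * t + d ≠ 0) :
    iteratedDeriv m
        (fun s => F ((a * s + b) / (c * s + d)) * ((c * s + d)⁻¹) ^ (1 - (m : ℤ))) t
      = iteratedDeriv m F ((a * t + b) / (c * t + d)) * ((c * t + d)⁻¹) ^ (1 + (m : ℤ)) := by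
  have hweight : ∀ w : ℂ, w ≠ 0 → w⁻¹ ^ (1 - (m : ℤ)) = w ^ m / w := fun w hw => by
    rw [inv_zpow', neg_sub, zpow_sub_one₀ hw, zpow_natCast, div_eq_mul_inv]
  have hnear : (fun s => F ((a * s + b) / (c * s + d)) * ((c * s + d)⁻¹) ^ (1 - (m : ℤ)))
      =ᶠ[𝓝 t] fun s => (c * s + d) ^ m * (F ((a * s + b) / (c * s + d)) / (c * s + d)) :=
    ((hasDerivAt_affine c d t).continuousAt.eventually_ne ht).mono fun s hs => by
      dsimp only
      rw [hweight _ hs]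
      ring
  rw [hnear.iteratedDeriv_eq, iteratedDeriv_pow_mul_comp_moebius_div hF.contDiff h m ht,
    inv_zpow', zpow_neg, ← div_eq_mul_inv, add_comm (1 : ℤ)]
  norm_cast

/-- **Bol's lemma.** Let `f(t) = (at+b)/(ct+d)` with `ad - bc = 1` and
`λ(t) = (ct+d)⁻¹`, so `f'(t) = λ(t)²`. Then for every holomorphic `F`, every `m ≥ 1`, and
every `t` with `ct + d ≠ 0`,
`(d/dt)^m [F(f(t))·λ(t)^{1-m}] = F⁽ᵐ⁾(f(t))·λ(t)^{1+m}`. -/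
theorem bol_lemma
    (a b c d : ℂ) (h : a * d - b * c = 1)
    (F : ℂ → ℂ) (hF : Differentiable ℂ F)
    (m : ℕ) (hm : 1 ≤ m) (t : ℂ) (ht : c * t + d ≠ 0) :
    iteratedDeriv m
        (fun s => F ((a * s + b) / (c * s + d)) * ((c * s + d)⁻¹) ^ (1 - (m : ℤ))) t
      = iteratedDeriv m F ((a * t + b) / (c * t + d)) * ((c * t + d)⁻¹) ^ (1 + (m : ℤ)) :=
  bol_lemma_general a b c d h F hF m t ht
end
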